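/- arXiv:1203.0865 — 2 statements merged into one kernel-verified Lean document; each statement's English description precedes it below -/
import Mathlib

section
/- Let γ ≥ 1, 0 < δ ≤ 1, K > 0. There exist ε₁ > 0 and M > 0, depending only on γ, δ, K, such that for every ε ∈ (0, ε₁) and every C¹ function ψ : [0,∞) → (0,∞) with ψ(0) = 1 satisfying ψ'(t) ≥ -K·ψ(t)·(ε^(2γ)·ψ(t)^(2γ) + ψ(t)^(2γ/δ)) for all t ≥ 0, one has ψ(1/ε^δ) ≥ M·ε^(δ²/(2γ)). -/
/-!
The profile `z(t) = (1 + 2K t / p)^(-p)` with `p = δ/(2γ)` solves `z' = -2K z^(1 + 2γ/δ)`, `z(0) = 1`,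
and decays on `[0, ε^(-δ)]` no further than to a constant multiple of `ε^(δ²/(2γ))`. Along that range
the term `ε^(2γ) z^(2γ)` of the equation is strictly dominated by `z^(2γ/δ)` once `ε` is small, so
`z` is a strict subsolution, and the comparison principle gives `z ≤ ψ` on `[0, ε^(-δ)]`.
-/

open Real Set Filter Topology

theorem le_of_strict_subsolution {f z z' ψ ψ' : ℝ → ℝ} {a b : ℝ}
    (hz : ∀ t ∈ Icc a b, HasDerivAt z (z' t) t) (hψ : ∀ t ∈ Icc a b, HasDerivAt ψ (ψ' t) t)
    (ha : z a ≤ ψ a) (hsub : ∀ t ∈ Ico a b, z' t < f (z t))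
    (hsuper : ∀ t ∈ Ico a b, f (ψ t) ≤ ψ' t) : ∀ t ∈ Icc a b, z t ≤ ψ t :=
  image_le_of_deriv_right_lt_deriv_boundary'
    (fun t ht => (hz t ht).continuousAt.continuousWithinAt)
    (fun t ht => (hz t (Ico_subset_Icc_self ht)).hasDerivWithinAt) ha
    (fun t ht => (hψ t ht).continuousAt.continuousWithinAt)
    (fun t ht => (hψ t (Ico_subset_Icc_self ht)).hasDerivWithinAt)
    (fun t ht heq => heq ▸ hsub t ht |>.trans_le (hsuper t ht))

/-- The solution of `y' = -a y^(1 + 1/p)`, `y(0) = 1`. -/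
noncomputable def powerDecay (p a t : ℝ) : ℝ := (1 + a * t / p) ^ (-p)

namespace powerDecay

variable {p a t : ℝ}

@[simp] theorem zero_right : powerDecay p a 0 = 1 := by simp [powerDecay]

theorem pos (ht : 0 < 1 + a * t / p) : 0 < powerDecay p a t := rpow_pos_of_pos ht _

theorem hasDerivAt (hp : p ≠ 0) (ht : 0 < 1 + a * t / p) :
    HasDerivAt (powerDecay p a) (-a * powerDecay p a t ^ (1 + 1 / p)) t := by
  have hbase : HasDerivAt (fun t => 1 + a * t / p) (a / p) t := by
    simpa using ((hasDerivAt_id t).const_mul a).div_const p |>.const_add 1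
  convert hbase.rpow_const (p := -p) (Or.inl ht.ne') using 1
  · rfl
  · rw [powerDecay, ← rpow_mul ht.le]
    field_simp
    ring_nf

theorem mul_rpow_neg_le (hp : 0 < p) (ha : 0 ≤ a) {T : ℝ} (hT : 1 ≤ T) (ht : t ∈ Icc 0 T) :
    (1 + a / p) ^ (-p) * T ^ (-p) ≤ powerDecay p a t := by
  have hbase : 0 < 1 + a * t / p := by have := ht.1; positivity
  rw [← mul_rpow (by positivity) (by linarith), powerDecay]
  refine rpow_le_rpow_of_nonpos hbase ?_ (neg_nonpos.2 hp.le)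
  calc 1 + a * t / p ≤ T + a * T / p := by gcongr; exacts [ht.2]
    _ = (1 + a / p) * T := by ring

end powerDecay

theorem neg_two_mul_rpow_lt_of_lt_rpow {K ε γ δ y : ℝ} (hK : 0 < K) (hγ : 0 < γ) (hy : 0 < y)
    (hε : 0 ≤ ε) (h : ε < y ^ (1 / δ - 1)) :
    -(2 * K) * y ^ (1 + 2 * γ / δ) < -K * y * (ε ^ (2 * γ) * y ^ (2 * γ) + y ^ (2 * γ / δ)) := by
  have hroot : ε * y < y ^ (1 / δ) :=
    calc ε * y < y ^ (1 / δ - 1) * y := mul_lt_mul_of_pos_right h hy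
      _ = y ^ (1 / δ) := by rw [rpow_sub_one hy.ne', div_mul_cancel₀ _ hy.ne']
  have hdom : ε ^ (2 * γ) * y ^ (2 * γ) < y ^ (2 * γ / δ) := by
    rw [← mul_rpow hε hy.le, show 2 * γ / δ = 1 / δ * (2 * γ) by ring, rpow_mul hy.le]
    exact rpow_lt_rpow (by positivity) hroot (by positivity)
  rw [rpow_add hy, rpow_one]
  nlinarith [mul_lt_mul_of_pos_left hdom (mul_pos hK hy)]

theorem eventually_lt_mul_rpow {c r : ℝ} (hc : 0 < c) (hr : r < 1) :
    ∀ᶠ ε in 𝓝[>] 0, ε < c * ε ^ r := by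
  have hlim : Tendsto (fun ε : ℝ => ε ^ (1 - r)) (𝓝[>] 0) (𝓝 0) := by
    have := (continuousAt_rpow_const 0 (1 - r) (Or.inr (by linarith))).tendsto
    rw [zero_rpow (by linarith)] at this
    exact this.mono_left nhdsWithin_le_nhds
  filter_upwards [hlim.eventually (gt_mem_nhds hc), self_mem_nhdsWithin] with ε hlt hε
  calc ε = ε ^ (1 - r) * ε ^ r := by rw [← rpow_add hε]; simp
    _ < c * ε ^ r := mul_lt_mul_of_pos_right hlt (rpow_pos_of_pos hε _)

theorem mul_rpow_le_of_supersolution {γ δ K p ε : ℝ} {ψ ψ' : ℝ → ℝ} (hγ : 0 < γ) (hδ0 : 0 < δ)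
    (hδ1 : δ ≤ 1) (hK : 0 < K) (hp : p = δ / (2 * γ)) (hε0 : 0 < ε) (hε1 : ε < 1)
    (hsmall : ε < ((1 + 2 * K / p) ^ (-p)) ^ (1 / δ - 1) * ε ^ (p * (1 - δ)))
    (hψ : ∀ t ≥ 0, HasDerivAt ψ (ψ' t) t) (hψ0 : ψ 0 = 1)
    (hODE : ∀ t ≥ 0, ψ' t ≥ -K * ψ t * (ε ^ (2 * γ) * ψ t ^ (2 * γ) + ψ t ^ (2 * γ / δ))) :
    (1 + 2 * K / p) ^ (-p) * ε ^ (δ * p) ≤ ψ (1 / ε ^ δ) := by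
  set M := (1 + 2 * K / p) ^ (-p)
  have hp0 : 0 < p := hp ▸ by positivity
  have hbase : ∀ t ≥ 0, 0 < 1 + 2 * K * t / p := fun t ht => by positivity
  have hT : 1 ≤ 1 / ε ^ δ := one_le_one_div (by positivity) (rpow_le_one hε0.le hε1.le hδ0.le)
  have hlow : ∀ t ∈ Icc 0 (1 / ε ^ δ), M * ε ^ (δ * p) ≤ powerDecay p (2 * K) t := by
    intro t ht
    convert powerDecay.mul_rpow_neg_le (a := 2 * K) hp0 (by positivity) hT ht using 2
    rw [one_div, inv_rpow (by positivity), rpow_neg (by positivity), inv_inv, ← rpow_mul hε0.le]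
  have hT_mem : 1 / ε ^ δ ∈ Icc 0 (1 / ε ^ δ) := ⟨by positivity, le_rfl⟩
  refine (hlow _ hT_mem).trans <| le_of_strict_subsolution
    (f := fun y => -K * y * (ε ^ (2 * γ) * y ^ (2 * γ) + y ^ (2 * γ / δ)))
    (fun t ht => powerDecay.hasDerivAt hp0.ne' (hbase t ht.1)) (fun t ht => hψ t ht.1)
    (by simp [hψ0]) (fun t ht => ?_) (fun t ht => hODE t ht.1) _ hT_mem
  have hz := powerDecay.pos (hbase t ht.1)
  rw [show 1 / p = 2 * γ / δ by rw [hp, one_div_div]]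
  refine neg_two_mul_rpow_lt_of_lt_rpow hK hγ hz hε0.le ?_
  calc ε < M ^ (1 / δ - 1) * ε ^ (p * (1 - δ)) := hsmall
    _ = (M * ε ^ (δ * p)) ^ (1 / δ - 1) := by
      rw [mul_rpow (by positivity) (by positivity), ← rpow_mul hε0.le]
      congr 2
      field_simp
    _ ≤ powerDecay p (2 * K) t ^ (1 / δ - 1) :=
      rpow_le_rpow (by positivity) (hlow t (Ico_subset_Icc_self ht))
        (sub_nonneg.2 (one_le_one_div hδ0 hδ1))

theorem stmt_5 (γ δ K : ℝ) (hγ : 1 ≤ γ) (hδ0 : 0 < δ) (hδ1 : δ ≤ 1) (hK : 0 < K) :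
    ∃ ε₁ > 0, ∃ M > 0, ∀ ε, 0 < ε → ε < ε₁ →
      ∀ ψ ψ' : ℝ → ℝ, (∀ t ≥ 0, HasDerivAt ψ (ψ' t) t) →
        (∀ t ≥ 0, 0 < ψ t) → ψ 0 = 1 →
        (∀ t ≥ 0, ψ' t ≥ -K * ψ t * (ε ^ (2 * γ) * (ψ t) ^ (2 * γ) + (ψ t) ^ (2 * γ / δ))) →
        ψ (1 / ε ^ δ) ≥ M * ε ^ (δ ^ 2 / (2 * γ)) := by
  set p := δ / (2 * γ)
  have hp0 : 0 < p := by positivity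
  have hp_half : p ≤ 1 / 2 := by rw [div_le_iff₀ (by positivity)]; linarith
  have hM : 0 < (1 + 2 * K / p) ^ (-p) := by positivity
  have hr : p * (1 - δ) < 1 := by nlinarith
  obtain ⟨ε₁, hε₁, hsmall⟩ := (nhdsGT_basis 0).eventually_iff.1 <|
    (eventually_lt_mul_rpow (rpow_pos_of_pos hM (1 / δ - 1)) hr).and
      ((nhdsGT_basis 0).mem_of_mem zero_lt_one)
  refine ⟨ε₁, hε₁, _, hM, fun ε hε0 hεε₁ ψ ψ' hψ _ hψ0 hODE => ?_⟩
  obtain ⟨hlt, -, hε1⟩ := hsmall ⟨hε0, hεε₁⟩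
  rw [ge_iff_le, show δ ^ 2 / (2 * γ) = δ * p by ring]
  exact mul_rpow_le_of_supersolution (by positivity) hδ0 hδ1 hK rfl hε0 hε1 hlt hψ hψ0 hODE
end

section
/- Let H be a real Hilbert space, A a nonnegative self-adjoint operator, and let u, v ∈ D(A) with c, d > 0 real numbers defined by c := |A^(1/2)u|^(2γ) and d := |A^(1/2)v|^(2γ) for some γ ≥ 1. Then ⟨c·Au - d·Av, u - v⟩ ≥ (1/2)(c + d)·|A^(1/2)(u - v)|². -/
open RealInnerProductSpace in
theorem stmt_7 {H : Type*} [NormedAddCommGroup H] [InnerProductSpace ℝ H]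
    (A : H →ₗ[ℝ] H)
    (hsym : ∀ x y : H, ⟪A x, y⟫ = ⟪x, A y⟫)
    (hnonneg : ∀ x : H, 0 ≤ ⟪A x, x⟫)
    (γ : ℝ) (hγ : 1 ≤ γ) (u v : H)
    (c d : ℝ) (hc : c = (⟪A u, u⟫) ^ γ) (hd : d = (⟪A v, v⟫) ^ γ) :
    ⟪c • A u - d • A v, u - v⟫ ≥ (1 / 2) * (c + d) * ⟪A (u - v), u - v⟫ := by
  have ha : (0:ℝ) ≤ ⟪A u, u⟫ := hnonneg u
  have hb : (0:ℝ) ≤ ⟪A v, v⟫ := hnonneg v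
  have hpq : ⟪A v, u⟫ = ⟪A u, v⟫ := by
    rw [hsym v u, real_inner_comm]
  have key : 0 ≤ (c - d) * (⟪A u, u⟫ - ⟪A v, v⟫) := by
    rcases le_total (⟪A u, u⟫) (⟪A v, v⟫) with h | h
    · have : c ≤ d := by
        rw [hc, hd]; exact Real.rpow_le_rpow ha h (by linarith)
      nlinarith [mul_nonneg (by linarith : (0:ℝ) ≤ d - c) (by linarith : (0:ℝ) ≤ ⟪A v, v⟫ - ⟪A u, u⟫)]
    · have : d ≤ c := by
        rw [hc, hd]; exact Real.rpow_le_rpow hb h (by linarith)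
      exact mul_nonneg (by linarith) (by linarith)
  simp only [inner_sub_left, inner_sub_right, inner_smul_left, map_sub,
    RCLike.conj_to_real, ge_iff_le]
  rw [hpq]
  nlinarith [key]
end
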